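/- arXiv:2404.07076 — 3 statements merged into one kernel-verified Lean document; each statement's English description precedes it below -/
import Mathlib

section
/- Let X be a compact metric space, (φⱼ)ⱼ≥0 a sequence of multivalued self-maps of X, and k ≥ 1. Define the k-th iterate sequence φ^[k] by (φ^[k])ⱼ := φ_{jk+k−1} ∘ … ∘ φ_{jk}. Then h(φ^[k]₀,∞) ≤ k · h(φ₀,∞), where h denotes the parametric topological entropy on orbits defined via separated sets. -/
open Filter

noncomputable section

/-- A set `S` is `(q,ε)`-separated if any two distinct points of `S` are at `q`-distance `> ε`. -/
def SepSet {α : Type*} (q : α → α → ℝ) (ε : ℝ) (S : Set α) : Prop :=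
  ∀ ⦃x⦄, x ∈ S → ∀ ⦃y⦄, y ∈ S → x ≠ y → ε < q x y

/-- The maximal cardinality of a finite `(q,ε)`-separated subset of `A`. -/
def maxSep {α : Type*} (q : α → α → ℝ) (ε : ℝ) (A : Set α) : ℕ :=
  sSup {m | ∃ S : Set α, S ⊆ A ∧ SepSet q ε S ∧ S.Finite ∧ S.ncard = m}

/-- The minimal cardinality of a finite `(q,ε)`-spanning set in `A`. -/
def minSpan {α : Type*} (q : α → α → ℝ) (ε : ℝ) (A : Set α) : ℕ :=
  sInf {m | ∃ R : Set α, R ⊆ A ∧ (∀ y ∈ A, ∃ x ∈ R, q x y ≤ ε) ∧ R.Finite ∧ R.ncard = m}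

/-- The set of `n`-orbits of the sequence of multivalued maps `φ`. -/
def Orb {X : Type*} (φ : ℕ → X → Set X) (n : ℕ) : Set (Fin n → X) :=
  {x | ∀ (i : ℕ) (h : i + 1 < n), x ⟨i + 1, h⟩ ∈ φ i (x ⟨i, by omega⟩)}

/-- Topological entropy via separated sets (`Fin n → X` carries the sup metric). -/
def entSep {X : Type*} [MetricSpace X] (φ : ℕ → X → Set X) : EReal :=
  ⨆ (ε : ℝ) (_ : 0 < ε),
    Filter.limsup
      (fun n : ℕ =>
        ((Real.log (maxSep (fun a b : Fin n → X => dist a b) ε (Orb φ n)) / n : ℝ) : EReal))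
      Filter.atTop

/-- Topological entropy via spanning sets. -/
def entSpan {X : Type*} [MetricSpace X] (φ : ℕ → X → Set X) : EReal :=
  ⨆ (ε : ℝ) (_ : 0 < ε),
    Filter.limsup
      (fun n : ℕ =>
        ((Real.log (minSpan (fun a b : Fin n → X => dist a b) ε (Orb φ n)) / n : ℝ) : EReal))
      Filter.atTop

end

/-- Composition of multivalued maps: `(ψ ∘ φ)(x) = ⋃_{y ∈ φ x} ψ y`. -/
def mcomp {X : Type*} (ψ φ : X → Set X) : X → Set X := fun x => ⋃ y ∈ φ x, ψ y

/-- `block φ a m = φ_{a+m-1} ∘ … ∘ φ_a` (the identity for `m = 0`). -/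
def block {X : Type*} (φ : ℕ → X → Set X) (a : ℕ) : ℕ → X → Set X
  | 0 => fun x => {x}
  | (m + 1) => mcomp (φ (a + m)) (block φ a m)

/-- The `k`-th iterate sequence: `(φ^[k])ⱼ = φ_{jk+k−1} ∘ … ∘ φ_{jk}`. -/
def iterSeq {X : Type*} (φ : ℕ → X → Set X) (k : ℕ) : ℕ → X → Set X :=
  fun j => block φ (j * k) k

/-!
An `n`-orbit `x₀, …, x_{n-1}` of `φ^[k]` is the subsample `y₀, y_k, …, y_{(n-1)k}` of an
`nk`-orbit `y` of `φ`: the block `φ_{ik+k-1} ∘ … ∘ φ_{ik}` joining `xᵢ` to `x_{i+1}` supplies the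
intermediate points, and since every `φⱼ x` is nonempty the last point can be continued for `k - 1`
more steps. Subsampling is `1`-Lipschitz for the sup metric, so an `ε`-separated set of `n`-orbits of
`φ^[k]` lifts to an `ε`-separated set of `nk`-orbits of `φ` of the same size. Hence
`log s(φ^[k], ε, n) / n ≤ k · log s(φ, ε, nk) / (nk)`, and a limsup along the subsequence `nk` is at
most the full limsup. Compactness bounds the size of `ε`-separated sets; without it `maxSep`, a
supremum in `ℕ`, could take the junk value `0` on the orbits of `φ`.
-/

open Filter Set

section Chains

variable {X : Type*} (φ : ℕ → X → Set X)

lemma exists_chain_of_mem_block (a : ℕ) :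
    ∀ (m : ℕ) {x x' : X}, x' ∈ block φ a m x →
      ∃ c : ℕ → X, c 0 = x ∧ c m = x' ∧ ∀ r < m, c (r + 1) ∈ φ (a + r) (c r)
  | 0, x, x', h => ⟨fun _ => x, rfl, (mem_singleton_iff.1 h).symm, by omega⟩
  | m + 1, x, x', h => by
    simp only [block, mcomp, mem_iUnion, exists_prop] at h
    obtain ⟨y, hy, hx'⟩ := h
    obtain ⟨c, hc0, hcm, hstep⟩ := exists_chain_of_mem_block a m hy
    refine ⟨Function.update c (m + 1) x', by simp [hc0], by simp, fun r hr => ?_⟩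
    rcases Nat.lt_succ_iff_lt_or_eq.1 hr with hr | rfl
    · simpa [Function.update_of_ne (show r + 1 ≠ m + 1 by omega),
        Function.update_of_ne (show r ≠ m + 1 by omega)] using hstep r hr
    · simpa [hcm] using hx'

lemma exists_chain_of_nonempty (hne : ∀ j x, (φ j x).Nonempty) (a : ℕ) (x : X) :
    ∃ c : ℕ → X, c 0 = x ∧ ∀ r, c (r + 1) ∈ φ (a + r) (c r) :=
  ⟨fun r => Nat.rec x (fun r y => (hne (a + r) y).some) r, rfl,
    fun r => (hne (a + r) _).some_mem⟩

lemma concat_segments_mem {k n : ℕ} (hk : 0 < k) {C : ℕ → ℕ → X}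
    (hstep : ∀ i < n, ∀ r < k, C i (r + 1) ∈ φ (i * k + r) (C i r))
    (hjoin : ∀ i, i + 1 < n → C (i + 1) 0 = C i k) {j : ℕ} (hj : j + 1 < n * k) :
    C ((j + 1) / k) ((j + 1) % k) ∈ φ j (C (j / k) (j % k)) := by
  have hsplit : j / k * k + j % k = j := Nat.div_add_mod' j k
  have hr : j % k < k := Nat.mod_lt j hk
  have hi : j / k < n := (Nat.div_lt_iff_lt_mul hk).2 (by omega)
  suffices C ((j + 1) / k) ((j + 1) % k) = C (j / k) (j % k + 1) by
    rw [this]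
    simpa [hsplit] using hstep _ hi _ hr
  rcases Nat.lt_or_ge (j % k + 1) k with hlt | hge
  · have hj1 : j + 1 = j % k + 1 + j / k * k := by omega
    rw [hj1, Nat.add_mul_div_right _ _ hk, Nat.add_mul_mod_self_right, Nat.div_eq_of_lt hlt,
      Nat.mod_eq_of_lt hlt, zero_add]
  · have hj1 : j + 1 = (j / k + 1) * k := by rw [Nat.succ_mul]; omega
    have hi1 : j / k + 1 < n := Nat.lt_of_mul_lt_mul_right (hj1 ▸ hj)
    rw [hj1, Nat.mul_div_cancel _ hk, Nat.mul_mod_left, hjoin _ hi1]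
    congr 1
    omega

lemma exists_segment_of_mem_orb_iterSeq (hne : ∀ j x, (φ j x).Nonempty) {k n : ℕ}
    {x : Fin n → X} (hx : x ∈ Orb (iterSeq φ k) n) (i : Fin n) :
    ∃ c : ℕ → X, c 0 = x i ∧ (∀ r < k, c (r + 1) ∈ φ (i * k + r) (c r)) ∧
      ∀ h : (i : ℕ) + 1 < n, c k = x ⟨i + 1, h⟩ := by
  by_cases h : (i : ℕ) + 1 < n
  · obtain ⟨c, hc0, hck, hstep⟩ := exists_chain_of_mem_block φ _ k (hx i h)
    exact ⟨c, hc0, hstep, fun _ => hck⟩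
  · obtain ⟨c, hc0, hstep⟩ := exists_chain_of_nonempty φ hne (i * k) (x i)
    exact ⟨c, hc0, fun r _ => hstep r, fun h' => absurd h' h⟩

lemma exists_chain_of_mem_orb_iterSeq (hne : ∀ j x, (φ j x).Nonempty) {k n : ℕ} (hk : 0 < k)
    (hn : 0 < n) {x : Fin n → X} (hx : x ∈ Orb (iterSeq φ k) n) :
    ∃ c : ℕ → X, (∀ j, j + 1 < n * k → c (j + 1) ∈ φ j (c j)) ∧ ∀ i : Fin n, c (i * k) = x i := by
  have hseg : ∀ i : ℕ, ∃ c : ℕ → X, ∀ hi : i < n, c 0 = x ⟨i, hi⟩ ∧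
      (∀ r < k, c (r + 1) ∈ φ (i * k + r) (c r)) ∧ ∀ h : i + 1 < n, c k = x ⟨i + 1, h⟩ := by
    intro i
    by_cases hi : i < n
    · obtain ⟨c, hc⟩ := exists_segment_of_mem_orb_iterSeq φ hne hx ⟨i, hi⟩
      exact ⟨c, fun _ => hc⟩
    · exact ⟨fun _ => x ⟨0, hn⟩, fun hi' => absurd hi' hi⟩
  choose C hC using hseg
  refine ⟨fun j => C (j / k) (j % k),
    fun j hj => concat_segments_mem φ hk (fun i hi => (hC i hi).2.1)
      (fun i hi => by rw [(hC (i + 1) hi).1, (hC i (by omega)).2.2 hi]) hj,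
    fun i => ?_⟩
  simp only [Nat.mul_div_cancel _ hk, Nat.mul_mod_left]
  exact (hC i i.2).1

def subsample {X : Type*} {n k : ℕ} (hk : 0 < k) (y : Fin (n * k) → X) : Fin n → X :=
  fun i => y ⟨i * k, Nat.mul_lt_mul_of_pos_right i.2 hk⟩

lemma surjOn_subsample_orb (hne : ∀ j x, (φ j x).Nonempty) {k n : ℕ} (hk : 0 < k) :
    SurjOn (subsample hk) (Orb φ (n * k)) (Orb (iterSeq φ k) n) := by
  intro x hx
  rcases Nat.eq_zero_or_pos n with rfl | hn
  · exact ⟨fun j => absurd j.2 (by simp), fun j hj => absurd hj (by simp), funext fun i => i.elim0⟩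
  obtain ⟨c, hchain, hsample⟩ := exists_chain_of_mem_orb_iterSeq φ hne hk hn hx
  exact ⟨fun j => c j, fun j hj => hchain j hj, funext hsample⟩

end Chains

section Separated

variable {α β : Type*} [PseudoMetricSpace α] [PseudoMetricSpace β] {ε : ℝ}

lemma exists_forall_sepSet_ncard_le [CompactSpace α] (hε : 0 < ε) :
    ∃ N : ℕ, ∀ S : Set α, SepSet (fun a b => dist a b) ε S → S.ncard ≤ N := by
  obtain ⟨t, htfin, htcover⟩ :=
    Metric.totallyBounded_iff.1 (isCompact_univ (X := α)).totallyBounded (ε / 2) (half_pos hε)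
  refine ⟨t.ncard, fun S hS => ?_⟩
  have hnear : ∀ s, ∃ c ∈ t, dist s c < ε / 2 := fun s => by
    simpa using htcover (mem_univ s)
  choose f hft hfdist using hnear
  refine ncard_le_ncard_of_injOn f (fun s _ => hft s) (fun s hs s' hs' hff => ?_) htfin
  by_contra hss'
  have hs'near := hfdist s'
  rw [← hff] at hs'near
  linarith [hS hs hs' hss', dist_triangle_right s s' (f s), hfdist s]

lemma ncard_le_maxSep [CompactSpace α] (hε : 0 < ε) {A S : Set α} (hSA : S ⊆ A)
    (hS : SepSet (fun a b => dist a b) ε S) (hfin : S.Finite) :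
    S.ncard ≤ maxSep (fun a b => dist a b) ε A := by
  obtain ⟨N, hN⟩ := exists_forall_sepSet_ncard_le (α := α) hε
  exact le_csSup ⟨N, by rintro _ ⟨T, -, hT, -, rfl⟩; exact hN T hT⟩ ⟨S, hSA, hS, hfin, rfl⟩

lemma maxSep_le_of_lipschitzWith_one_of_surjOn [CompactSpace β] (hε : 0 < ε) {p : β → α}
    (hp : LipschitzWith 1 p) {A : Set α} {B : Set β} (hsurj : SurjOn p B A) :
    maxSep (fun a b => dist a b) ε A ≤ maxSep (fun a b => dist a b) ε B := by
  refine csSup_le ⟨0, ∅, empty_subset A, fun x hx => hx.elim, finite_empty, ncard_empty α⟩ ?_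
  rintro _ ⟨S, hSA, hS, hfin, rfl⟩
  obtain ⟨T, hTB, hbij⟩ := surjOn_iff_exists_bijOn_subset.1 (hsurj.mono subset_rfl hSA)
  have hTsep : SepSet (fun a b => dist a b) ε T := fun y hy y' hy' hyy' =>
    (hS (hbij.mapsTo hy) (hbij.mapsTo hy') (hbij.injOn.ne hy hy' hyy')).trans_le
      (by simpa using hp.dist_le_mul y y')
  have hTfin : T.Finite := Finite.of_finite_image (hbij.image_eq ▸ hfin) hbij.injOn
  calc S.ncard = T.ncard := by rw [← hbij.image_eq, hbij.injOn.ncard_image]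
    _ ≤ _ := ncard_le_maxSep hε hTB hTsep hTfin

end Separated

lemma lipschitzWith_subsample {X : Type*} [PseudoMetricSpace X] {n k : ℕ} (hk : 0 < k) :
    LipschitzWith 1 (subsample (X := X) (n := n) hk) :=
  LipschitzWith.of_dist_le_mul fun y y' => by
    rw [NNReal.coe_one, one_mul]
    exact (dist_pi_le_iff dist_nonneg).2 fun i => dist_le_pi_dist y y' _

lemma maxSep_orb_iterSeq_le {X : Type*} [MetricSpace X] [CompactSpace X] {φ : ℕ → X → Set X}
    (hne : ∀ j x, (φ j x).Nonempty) {k : ℕ} (hk : 0 < k) {ε : ℝ} (hε : 0 < ε) (n : ℕ) :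
    maxSep (fun a b : Fin n → X => dist a b) ε (Orb (iterSeq φ k) n) ≤
      maxSep (fun a b : Fin (n * k) → X => dist a b) ε (Orb φ (n * k)) :=
  maxSep_le_of_lipschitzWith_one_of_surjOn hε (lipschitzWith_subsample hk)
    (surjOn_subsample_orb φ hne hk)

lemma EReal.limsup_le_mul_limsup_comp_mul {u v : ℕ → EReal} {k : ℕ} (hk : 0 < k)
    (h : ∀ n, u n ≤ k * v (n * k)) : limsup u atTop ≤ k * limsup v atTop := by
  have hk0 : (0 : EReal) ≤ k := by exact_mod_cast (Nat.zero_le k)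
  calc limsup u atTop ≤ limsup (fun n => k * v (n * k)) atTop :=
        limsup_le_limsup (Eventually.of_forall h)
    _ = k * limsup (fun n => v (n * k)) atTop :=
        EReal.limsup_const_mul_of_nonneg_of_ne_top hk0 (EReal.natCast_ne_top k)
    _ ≤ k * limsup v atTop :=
        mul_le_mul_of_nonneg_left
          ((tendsto_id.atTop_mul_const' hk).limsup_comp_le_limsup (u := v)) hk0

lemma log_div_le_mul_log_div {a b : ℕ} (hab : a ≤ b) (n : ℕ) {k : ℕ} (hk : 0 < k) :
    Real.log a / n ≤ k * (Real.log b / (n * k : ℕ)) := by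
  have hrhs : (k : ℝ) * (Real.log b / (n * k : ℕ)) = Real.log b / n := by
    rw [Nat.cast_mul, mul_comm, div_mul_eq_mul_div, mul_div_mul_right _ _ (by positivity)]
  rw [hrhs]
  refine div_le_div_of_nonneg_right ?_ n.cast_nonneg
  rcases Nat.eq_zero_or_pos a with rfl | ha
  · simpa using Real.log_natCast_nonneg b
  · exact Real.log_le_log (Nat.cast_pos.2 ha) (Nat.cast_le.2 hab)

/-- `h(φ^[k]) ≤ k · h(φ)` for the parametric entropy on orbits via separated
sets. -/
theorem entSep_iterSeq_le
    {X : Type*} [MetricSpace X] [CompactSpace X]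
    (φ : ℕ → X → Set X) (hne : ∀ j x, (φ j x).Nonempty)
    (k : ℕ) (hk : 1 ≤ k) :
    entSep (iterSeq φ k) ≤ (k : EReal) * entSep φ := by
  refine iSup₂_le fun ε hε => ?_
  calc _ ≤ (k : EReal) * limsup (fun m : ℕ =>
          ((Real.log (maxSep (fun a b : Fin m → X => dist a b) ε (Orb φ m)) / m : ℝ) : EReal))
          atTop := by
        refine EReal.limsup_le_mul_limsup_comp_mul hk fun n => ?_
        rw [← EReal.coe_coe_eq_natCast, ← EReal.coe_mul, EReal.coe_le_coe_iff]
        exact log_div_le_mul_log_div (maxSep_orb_iterSeq_le hne hk hε n) n hk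
    _ ≤ (k : EReal) * entSep φ :=
        mul_le_mul_of_nonneg_left (le_iSup₂_of_le ε hε le_rfl) (by exact_mod_cast Nat.zero_le k)
end

section
/- Let X, Z be compact metric spaces and (rⱼ,qⱼ)ⱼ≥0 pairs of continuous maps rⱼ,qⱼ : Z → X with each rⱼ surjective, and φⱼ := qⱼ ∘ rⱼ⁻¹. Then for every ε > 0 and n ≥ 1, the maximal cardinality of a (p_{n+1},ε)-separated subset of Orb_{n+1}(φ₀,∞) equals the maximal cardinality of a (p*ₙ,ε)-separated subset of Coinₙ((r,q)₀,∞). -/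
open Filter

/-- The set of coincidence `n`-orbits of the sequence of pairs `(rⱼ, qⱼ)`. -/
def Coin {X Z : Type*} (r q : ℕ → Z → X) (n : ℕ) : Set (Fin n → Z) :=
  {z | ∀ (i : ℕ) (h : i + 1 < n), q i (z ⟨i, by omega⟩) = r (i + 1) (z ⟨i + 1, h⟩)}

/-- The pseudometric `p*ₙ` on `Zⁿ` induced by the pairs `(rⱼ, qⱼ)`. -/
noncomputable def pstar {X Z : Type*} [MetricSpace X] (r q : ℕ → Z → X) (n : ℕ)
    (z z' : Fin n → Z) : ℝ :=
  sSup {t | ∃ i : Fin n,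
    t = max (dist (r i (z i)) (r i (z' i))) (dist (q i (z i)) (q i (z' i)))}

section Aux

/-- Inclusion of achievable separated-set cardinalities along a distance-preserving map. -/
lemma card_sets_incl {α β : Type*} (dA : α → α → ℝ) (dB : β → β → ℝ) (ε : ℝ)
    (A : Set α) (B : Set β) (f : α → β)
    (hf : ∀ a ∈ A, f a ∈ B)
    (hd : ∀ a ∈ A, ∀ a' ∈ A, dB (f a) (f a') = dA a a')
    (hB : ∀ b ∈ B, ¬ ε < dB b b) :
    {m | ∃ S, S ⊆ A ∧ SepSet dA ε S ∧ S.Finite ∧ S.ncard = m} ⊆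
      {m | ∃ S, S ⊆ B ∧ SepSet dB ε S ∧ S.Finite ∧ S.ncard = m} := by
  rintro m ⟨S, hSA, hsep, hfin, rfl⟩
  have hinj : Set.InjOn f S := by
    intro a ha a' ha' hfa
    by_contra hne
    have h1 := hsep ha ha' hne
    rw [← hd a (hSA ha) a' (hSA ha'), hfa] at h1
    exact hB (f a') (hf a' (hSA ha')) h1
  refine ⟨f '' S, ?_, ?_, hfin.image f, Set.ncard_image_of_injOn hinj⟩
  · rintro b ⟨a, ha, rfl⟩; exact hf a (hSA ha)
  · rintro b ⟨a, ha, rfl⟩ b' ⟨a', ha', rfl⟩ hne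
    have hane : a ≠ a' := fun h => hne (by rw [h])
    rw [hd a (hSA ha) a' (hSA ha')]
    exact hsep ha ha' hane

/-- The map sending a coincidence orbit to its orbit in `X`. -/
noncomputable def pimap {X Z : Type*} (r q : ℕ → Z → X) (n : ℕ) (hn : 1 ≤ n)
    (z : Fin n → Z) : Fin (n + 1) → X :=
  fun i => if h : (i : ℕ) < n then r i (z ⟨i, h⟩) else q (n - 1) (z ⟨n - 1, by omega⟩)

lemma pimap_lt {X Z : Type*} (r q : ℕ → Z → X) (n : ℕ) (hn : 1 ≤ n)
    (z : Fin n → Z) (i : ℕ) (h : i < n) :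
    pimap r q n hn z ⟨i, by omega⟩ = r i (z ⟨i, h⟩) := dif_pos h

lemma pimap_last {X Z : Type*} (r q : ℕ → Z → X) (n : ℕ) (hn : 1 ≤ n)
    (z : Fin n → Z) :
    pimap r q n hn z ⟨n, by omega⟩ = q (n - 1) (z ⟨n - 1, by omega⟩) :=
  dif_neg (lt_irrefl n)

/-- On an empty type, `maxSep` is zero. -/
lemma maxSep_of_isEmpty {γ : Type*} [IsEmpty γ] (d : γ → γ → ℝ) (ε : ℝ) (A : Set γ) :
    maxSep d ε A = 0 := by
  have hset : {m | ∃ S : Set γ, S ⊆ A ∧ SepSet d ε S ∧ S.Finite ∧ S.ncard = m} = {0} := by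
    ext m
    constructor
    · rintro ⟨S, -, -, -, rfl⟩
      rw [Set.eq_empty_of_isEmpty S, Set.ncard_empty]
      rfl
    · rintro rfl
      exact ⟨∅, Set.empty_subset _, fun x hx => absurd hx (Set.notMem_empty x),
        Set.finite_empty, Set.ncard_empty _⟩
  rw [maxSep, hset, csSup_singleton]

end Aux

/-- For `φⱼ = qⱼ ∘ rⱼ⁻¹`, the maximal cardinality of a `(p_{n+1},ε)`-separated
subset of `Orb_{n+1}(φ)` equals the maximal cardinality of a `(p*ₙ,ε)`-separated subset of
`Coinₙ((r,q))`. -/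
theorem maxSep_orb_eq_maxSep_coin
    {X Z : Type*} [MetricSpace X] [CompactSpace X] [MetricSpace Z] [CompactSpace Z]
    (r q : ℕ → Z → X)
    (hr : ∀ j, Continuous (r j)) (hq : ∀ j, Continuous (q j))
    (hrsurj : ∀ j, Function.Surjective (r j))
    (φ : ℕ → X → Set X) (hφ : ∀ j x, φ j x = q j '' (r j ⁻¹' {x}))
    (ε : ℝ) (hε : 0 < ε) (n : ℕ) (hn : 1 ≤ n) :
    maxSep (fun a b : Fin (n + 1) → X => dist a b) ε (Orb φ (n + 1)) =
      maxSep (pstar r q n) ε (Coin r q n) := by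
  classical
  by_cases hZ : Nonempty Z
  case neg =>
    -- `Z` empty forces `X` empty (by surjectivity of `r 0`), so both sides are trivial.
    haveI hX : IsEmpty X := by
      constructor; intro x
      obtain ⟨z, -⟩ := hrsurj 0 x
      exact hZ ⟨z⟩
    haveI hZE : IsEmpty Z := not_nonempty_iff.mp hZ
    haveI hXfun : IsEmpty (Fin (n + 1) → X) :=
      ⟨fun f => hX.false (f ⟨0, by omega⟩)⟩
    haveI hZfun : IsEmpty (Fin n → Z) :=
      ⟨fun f => hZE.false (f ⟨0, by omega⟩)⟩
    rw [maxSep_of_isEmpty (fun a b : Fin (n + 1) → X => dist a b) ε (Orb φ (n + 1)),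
      maxSep_of_isEmpty (pstar r q n) ε (Coin r q n)]
  case pos =>
  -- `pimap` maps `Coin` to `Orb`
  have hπmem : ∀ z ∈ Coin r q n, pimap r q n hn z ∈ Orb φ (n + 1) := by
    intro z hz i hi
    have hi' : i < n := by omega
    rw [hφ]
    refine ⟨z ⟨i, hi'⟩, ?_, ?_⟩
    · show r i (z ⟨i, hi'⟩) = pimap r q n hn z ⟨i, by omega⟩
      exact (pimap_lt r q n hn z i hi').symm
    · show q i (z ⟨i, hi'⟩) = pimap r q n hn z ⟨i + 1, hi⟩
      by_cases h2 : i + 1 < n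
      · calc q i (z ⟨i, hi'⟩) = r (i + 1) (z ⟨i + 1, h2⟩) := hz i h2
          _ = pimap r q n hn z ⟨i + 1, hi⟩ := (pimap_lt r q n hn z (i + 1) h2).symm
      · have hieq : i = n - 1 := by omega
        have e : (⟨i + 1, hi⟩ : Fin (n + 1)) = ⟨n, by omega⟩ :=
          Fin.ext (show i + 1 = n by omega)
        rw [e, pimap_last r q n hn z]
        subst hieq
        rfl
  have hFinNe : Nonempty (Fin n) := ⟨⟨0, by omega⟩⟩
  -- `pimap` is an isometry between `pstar` and the sup metric on orbits
  have hdist : ∀ z ∈ Coin r q n, ∀ z' ∈ Coin r q n,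
      dist (pimap r q n hn z) (pimap r q n hn z') = pstar r q n z z' := by
    intro z hz z' hz'
    set F : Fin n → ℝ := fun i =>
      max (dist (r i (z i)) (r i (z' i))) (dist (q i (z i)) (q i (z' i))) with hF
    have hrange : {t | ∃ i : Fin n,
        t = max (dist (r i (z i)) (r i (z' i))) (dist (q i (z i)) (q i (z' i)))}
        = Set.range F := by
      ext t; simp [hF, eq_comm]
    have hps : pstar r q n z z' = sSup (Set.range F) := by rw [pstar, hrange]
    have hbdd : BddAbove (Set.range F) := (Set.finite_range F).bddAbove
    have hnen : (Set.range F).Nonempty := Set.range_nonempty _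
    have hcomp : ∀ j : Fin (n + 1), ∃ i : Fin n,
        dist (pimap r q n hn z j) (pimap r q n hn z' j) ≤ F i := by
      intro j
      rcases j with ⟨jv, hjlt⟩
      by_cases h : jv < n
      · refine ⟨⟨jv, h⟩, ?_⟩
        have e1 : pimap r q n hn z ⟨jv, hjlt⟩ = r jv (z ⟨jv, h⟩) := pimap_lt r q n hn z jv h
        have e2 : pimap r q n hn z' ⟨jv, hjlt⟩ = r jv (z' ⟨jv, h⟩) := pimap_lt r q n hn z' jv h
        rw [e1, e2]
        exact le_max_left _ _
      · have hj : (⟨jv, hjlt⟩ : Fin (n + 1)) = ⟨n, lt_add_one n⟩ :=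
          Fin.ext (show jv = n by omega)
        refine ⟨⟨n - 1, by omega⟩, ?_⟩
        rw [hj]
        have e1 : pimap r q n hn z ⟨n, lt_add_one n⟩ = q (n - 1) (z ⟨n - 1, by omega⟩) :=
          pimap_last r q n hn z
        have e2 : pimap r q n hn z' ⟨n, lt_add_one n⟩ = q (n - 1) (z' ⟨n - 1, by omega⟩) :=
          pimap_last r q n hn z'
        rw [e1, e2]
        exact le_max_right _ _
    have hFcomp : ∀ i : Fin n, F i ≤ dist (pimap r q n hn z) (pimap r q n hn z') := by
      intro i
      apply max_le
      · have e1 : pimap r q n hn z ⟨(i : ℕ), by omega⟩ = r i (z i) :=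
          pimap_lt r q n hn z i i.isLt
        have e2 : pimap r q n hn z' ⟨(i : ℕ), by omega⟩ = r i (z' i) :=
          pimap_lt r q n hn z' i i.isLt
        calc dist (r i (z i)) (r i (z' i))
            = dist (pimap r q n hn z ⟨(i : ℕ), by omega⟩)
              (pimap r q n hn z' ⟨(i : ℕ), by omega⟩) := by rw [e1, e2]
          _ ≤ dist (pimap r q n hn z) (pimap r q n hn z') := dist_le_pi_dist _ _ _
      · by_cases h2 : (i : ℕ) + 1 < n
        · have c1 : q i (z i) = r ((i : ℕ) + 1) (z ⟨(i : ℕ) + 1, h2⟩) := hz i h2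
          have c2 : q i (z' i) = r ((i : ℕ) + 1) (z' ⟨(i : ℕ) + 1, h2⟩) := hz' i h2
          have e1 : pimap r q n hn z ⟨(i : ℕ) + 1, by omega⟩
              = r ((i : ℕ) + 1) (z ⟨(i : ℕ) + 1, h2⟩) := pimap_lt r q n hn z ((i : ℕ) + 1) h2
          have e2 : pimap r q n hn z' ⟨(i : ℕ) + 1, by omega⟩
              = r ((i : ℕ) + 1) (z' ⟨(i : ℕ) + 1, h2⟩) := pimap_lt r q n hn z' ((i : ℕ) + 1) h2
          calc dist (q i (z i)) (q i (z' i))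
              = dist (pimap r q n hn z ⟨(i : ℕ) + 1, by omega⟩)
                (pimap r q n hn z' ⟨(i : ℕ) + 1, by omega⟩) := by rw [e1, e2, c1, c2]
            _ ≤ dist (pimap r q n hn z) (pimap r q n hn z') := dist_le_pi_dist _ _ _
        · have hiv : (i : ℕ) = n - 1 := by have := i.isLt; omega
          have hieq : i = (⟨n - 1, Nat.sub_lt (by omega) Nat.one_pos⟩ : Fin n) :=
            Fin.ext hiv
          rw [hieq]
          have e1 : pimap r q n hn z ⟨n, lt_add_one n⟩ = q (n - 1) (z ⟨n - 1, by omega⟩) :=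
            pimap_last r q n hn z
          have e2 : pimap r q n hn z' ⟨n, lt_add_one n⟩ = q (n - 1) (z' ⟨n - 1, by omega⟩) :=
            pimap_last r q n hn z'
          refine le_trans ?_
            (dist_le_pi_dist (pimap r q n hn z) (pimap r q n hn z') ⟨n, lt_add_one n⟩)
          rw [e1, e2]
    have hps_nonneg : 0 ≤ sSup (Set.range F) := by
      obtain ⟨t, i, rfl⟩ := hnen
      exact le_trans (le_trans dist_nonneg (le_max_left _ _)) (le_csSup hbdd ⟨i, rfl⟩)
    rw [hps]
    apply le_antisymm
    · rw [dist_pi_le_iff hps_nonneg]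
      intro j
      obtain ⟨i, hi⟩ := hcomp j
      exact le_trans hi (le_csSup hbdd ⟨i, rfl⟩)
    · exact csSup_le hnen (by rintro t ⟨i, rfl⟩; exact hFcomp i)
  -- every orbit lifts to a coincidence orbit
  have hlift : ∀ x ∈ Orb φ (n + 1), ∃ z ∈ Coin r q n, pimap r q n hn z = x := by
    intro x hx
    have hw : ∀ i : Fin n, ∃ w : Z,
        r i w = x ⟨(i : ℕ), by omega⟩ ∧ q i w = x ⟨(i : ℕ) + 1, by omega⟩ := by
      intro i
      have := hx (i : ℕ) (by omega)
      rw [hφ] at this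
      obtain ⟨w, hw1, hw2⟩ := this
      exact ⟨w, hw1, hw2⟩
    choose w hw1 hw2 using hw
    refine ⟨w, ?_, ?_⟩
    · intro i h
      have e1 : q i (w ⟨i, by omega⟩) = x ⟨i + 1, by omega⟩ := hw2 ⟨i, by omega⟩
      have e2 : r (i + 1) (w ⟨i + 1, h⟩) = x ⟨i + 1, by omega⟩ := hw1 ⟨i + 1, h⟩
      rw [e1, e2]
    · funext j
      rcases j with ⟨jv, hjlt⟩
      by_cases h : jv < n
      · have e : pimap r q n hn w ⟨jv, hjlt⟩ = r jv (w ⟨jv, h⟩) := pimap_lt r q n hn w jv h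
        rw [e]
        exact hw1 ⟨jv, h⟩
      · have hj : (⟨jv, hjlt⟩ : Fin (n + 1)) = ⟨n, lt_add_one n⟩ :=
          Fin.ext (show jv = n by omega)
        rw [hj]
        have e : pimap r q n hn w ⟨n, lt_add_one n⟩ = q (n - 1) (w ⟨n - 1, by omega⟩) :=
          pimap_last r q n hn w
        rw [e]
        have e2 : q (n - 1) (w ⟨n - 1, by omega⟩) = x ⟨n - 1 + 1, by omega⟩ :=
          hw2 ⟨n - 1, by omega⟩
        rw [e2]
        congr 1
        exact Fin.ext (show n - 1 + 1 = n by omega)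
  -- the lift as a total function
  have hZfun : Nonempty (Fin n → Z) := ⟨fun _ => Classical.arbitrary Z⟩
  let g : (Fin (n + 1) → X) → (Fin n → Z) := fun x =>
    if h : x ∈ Orb φ (n + 1) then (hlift x h).choose else Classical.arbitrary _
  have hg : ∀ x ∈ Orb φ (n + 1), g x ∈ Coin r q n ∧ pimap r q n hn (g x) = x := by
    intro x hx
    simp only [g, dif_pos hx]
    exact ⟨(hlift x hx).choose_spec.1, (hlift x hx).choose_spec.2⟩
  -- conclude
  rw [maxSep, maxSep]
  congr 1
  apply Set.Subset.antisymm
  · apply card_sets_incl (fun a b : Fin (n + 1) → X => dist a b) (pstar r q n) ε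
      (Orb φ (n + 1)) (Coin r q n) g
    · intro x hx; exact (hg x hx).1
    · intro x hx x' hx'
      rw [← hdist (g x) (hg x hx).1 (g x') (hg x' hx').1, (hg x hx).2, (hg x' hx').2]
    · intro z hz h
      have h0 : pstar r q n z z = 0 := by
        rw [← hdist z hz z hz, dist_self]
      rw [h0] at h
      exact absurd h (not_lt.mpr hε.le)
  · apply card_sets_incl (pstar r q n) (fun a b : Fin (n + 1) → X => dist a b) ε
      (Coin r q n) (Orb φ (n + 1)) (pimap r q n hn) hπmem
    · intro z hz z' hz'
      exact hdist z hz z' hz'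
    · intro b _ h
      rw [dist_self] at h
      exact absurd h (not_lt.mpr hε.le)
end

section
/- Let X be a compact metric space and (φⱼ)ⱼ≥0 a sequence of multivalued self-maps of X. Then h(φ₀,∞) ≤ h_m(φ₀,∞) + h_i(φ₀,∞), where h is the entropy on orbits (sup over ε of limsup (1/n) log of the minimal cardinality r(ε,n) of an ε-spanning set of Orbₙ), h_m is the pointwise entropy sup_{ε>0} limsup_n (1/n) log sup_x r(ε,n,x) with r(ε,n,x) the minimal cardinality of an ε-spanning set in Orbₙ(φ₀,∞,x), and h_i is the branch entropy sup_{ε>0} limsup_n (1/n) log s_b(ε,n) with s_b(ε,n) the supremal cardinality (interpreted as ∞ if infinite) of a (p_n^b,ε)-separated subset of X, p_n^b(x,y) being the Hausdorff distance between Orbₙ(φ₀,∞,x) and Orbₙ(φ₀,∞,y) with respect to the max metric on Xⁿ. -/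
open Filter

noncomputable section

/-- The set of `n`-orbits starting at `x`. -/
def OrbAt {X : Type*} (φ : ℕ → X → Set X) (n : ℕ) (x : X) : Set (Fin n → X) :=
  {xb ∈ Orb φ n | ∀ h : 0 < n, xb ⟨0, h⟩ = x}

/-- Pointwise entropy `h_p`: sup over `x` outside the limsup. -/
def entP {X : Type*} [MetricSpace X] (φ : ℕ → X → Set X) : EReal :=
  ⨆ (x : X) (ε : ℝ) (_ : 0 < ε),
    Filter.limsup
      (fun n : ℕ =>
        ((Real.log (maxSep (fun a b : Fin n → X => dist a b) ε (OrbAt φ n x)) / n : ℝ) : EReal))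
      Filter.atTop

/-- Pointwise entropy `h_m`: sup over `x` inside the limsup. -/
def entM {X : Type*} [MetricSpace X] (φ : ℕ → X → Set X) : EReal :=
  ⨆ (ε : ℝ) (_ : 0 < ε),
    Filter.limsup
      (fun n : ℕ =>
        ((Real.log (⨆ x : X, maxSep (fun a b : Fin n → X => dist a b) ε (OrbAt φ n x)) / n : ℝ) :
          EReal))
      Filter.atTop

end

noncomputable section

/-- Pointwise spanning entropy `h_m`: sup over `x` of minimal spanning cardinalities inside the
limsup. -/
def entMSpan {X : Type*} [MetricSpace X] (φ : ℕ → X → Set X) : EReal :=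
  ⨆ (ε : ℝ) (_ : 0 < ε),
    Filter.limsup
      (fun n : ℕ =>
        ((Real.log (⨆ x : X, minSpan (fun a b : Fin n → X => dist a b) ε (OrbAt φ n x)) / n : ℝ) :
          EReal))
      Filter.atTop

/-- The branch pseudometric `p_n^b`: Hausdorff distance between the `n`-orbit sets issuing from
two points, w.r.t. the max metric on `Xⁿ`. -/
def pnb {X : Type*} [MetricSpace X] (φ : ℕ → X → Set X) (n : ℕ) (x y : X) : ℝ :=
  Metric.hausdorffDist (OrbAt φ n x) (OrbAt φ n y)

/-- The branch entropy `h_i` via `(p_n^b,ε)`-separated subsets of `X`. -/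
def entI {X : Type*} [MetricSpace X] (φ : ℕ → X → Set X) : EReal :=
  ⨆ (ε : ℝ) (_ : 0 < ε),
    Filter.limsup
      (fun n : ℕ =>
        ((Real.log (maxSep (pnb φ n) ε (Set.univ : Set X)) / n : ℝ) : EReal))
      Filter.atTop

section Helpers
open Set Metric TopologicalSpace
variable {X : Type*} [MetricSpace X]

lemma orbAt_nonempty (φ : ℕ → X → Set X) (hne : ∀ j x, (φ j x).Nonempty) (n : ℕ) (x : X) :
    (OrbAt φ n x).Nonempty := by
  classical
  let g : ℕ → X := fun i => Nat.rec x (fun j y => (hne j y).choose) i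
  have hg : ∀ i, g (i + 1) ∈ φ i (g i) := fun i => (hne i (g i)).choose_spec
  exact ⟨fun i => g i.1, fun i h => hg i, fun h => rfl⟩

lemma exists_span_bound {Y : Type*} [MetricSpace Y] [CompactSpace Y] {ε : ℝ} (hε : 0 < ε) :
    ∃ N : ℕ, ∀ A : Set Y, ∃ R : Set Y, R ⊆ A ∧ (∀ y ∈ A, ∃ x ∈ R, dist x y ≤ ε)
      ∧ R.Finite ∧ R.ncard ≤ N := by
  classical
  obtain ⟨t, -, htf, htc⟩ := (isCompact_univ (X := Y)).finite_cover_balls (half_pos hε)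
  refine ⟨t.ncard, fun A => ?_⟩
  rcases A.eq_empty_or_nonempty with rfl | ⟨a0, ha0⟩
  · exact ⟨∅, by simp, by simp, finite_empty, by simp⟩
  set pick : Y → Y := fun c =>
    if h : (A ∩ ball c (ε / 2)).Nonempty then h.choose else a0 with hpick
  have pickA : ∀ c, pick c ∈ A := by
    intro c; by_cases h : (A ∩ ball c (ε / 2)).Nonempty
    · simp only [hpick, dif_pos h]; exact h.choose_spec.1
    · simp only [hpick, dif_neg h]; exact ha0
  refine ⟨pick '' t, ?_, ?_, htf.image _, Set.ncard_image_le htf⟩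
  · rintro _ ⟨c, -, rfl⟩; exact pickA c
  · intro y hy
    obtain ⟨c, hct, hyc⟩ := mem_iUnion₂.1 (htc (mem_univ y))
    have h : (A ∩ ball c (ε / 2)).Nonempty := ⟨y, hy, hyc⟩
    refine ⟨pick c, ⟨c, hct, rfl⟩, ?_⟩
    have h1 : dist (pick c) c < ε / 2 := by
      simpa [hpick, dif_pos h] using mem_ball.1 h.choose_spec.2
    have h2 : dist y c < ε / 2 := mem_ball.1 hyc
    have h3 := dist_triangle (pick c) c y
    rw [dist_comm y c] at h2
    linarith

lemma sep_bound {Z : Type*} [MetricSpace Z] [CompactSpace Z] {ε : ℝ} (hε : 0 < ε) :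
    ∃ N : ℕ, ∀ S : Set Z, SepSet dist ε S → S.Finite → S.ncard ≤ N := by
  classical
  obtain ⟨t, -, htf, htc⟩ := (isCompact_univ (X := Z)).finite_cover_balls (half_pos hε)
  refine ⟨t.ncard, fun S hS hSf => ?_⟩
  choose f hf1 hf2 using fun s : Z => mem_iUnion₂.1 (htc (mem_univ s))
  refine Set.ncard_le_ncard_of_injOn f (fun a _ => hf1 a) ?_ htf
  intro a ha b hb hab
  by_contra hne'
  have h1 : dist a (f a) < ε / 2 := mem_ball.1 (hf2 a)
  have h2 : dist b (f b) < ε / 2 := mem_ball.1 (hf2 b)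
  rw [hab] at h1
  have h3 := dist_triangle a (f b) b
  rw [dist_comm (f b) b] at h3
  have := hS ha hb hne'
  linarith

lemma pnb_sep_bound [CompactSpace X] (φ : ℕ → X → Set X)
    (hne : ∀ j x, (φ j x).Nonempty) (n : ℕ) {ε : ℝ} (hε : 0 < ε) :
    ∃ N : ℕ, ∀ S : Set X, SepSet (pnb φ n) ε S → S.Finite → S.ncard ≤ N := by
  obtain ⟨N, hN⟩ := sep_bound (Z := NonemptyCompacts (Fin n → X)) hε
  set F : X → NonemptyCompacts (Fin n → X) := fun x =>
    ⟨⟨closure (OrbAt φ n x), isClosed_closure.isCompact⟩,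
      (orbAt_nonempty φ hne n x).closure⟩ with hF
  have hdist : ∀ x y, pnb φ n x y = dist (F x) (F y) := by
    intro x y
    rw [NonemptyCompacts.dist_eq]
    exact (Metric.hausdorffDist_closure).symm
  refine ⟨N, fun S hS hSf => ?_⟩
  have hinj : Set.InjOn F S := by
    intro a ha b hb hab
    by_contra hne'
    have h := hS ha hb hne'
    rw [hdist, hab, dist_self] at h
    linarith
  rw [← Set.ncard_image_of_injOn hinj]
  refine hN _ ?_ (hSf.image F)
  rintro _ ⟨a, ha, rfl⟩ _ ⟨b, hb, rfl⟩ hab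
  have : a ≠ b := fun h => hab (by rw [h])
  rw [← hdist]; exact hS ha hb this

lemma main_count [CompactSpace X] [Nonempty X] (φ : ℕ → X → Set X)
    (hne : ∀ j x, (φ j x).Nonempty) {ε : ℝ} (hε : 0 < ε) (n : ℕ) :
    (1:ℝ) ≤ (⨆ x : X, (minSpan (fun a b : Fin n → X => dist a b) (ε / 3) (OrbAt φ n x) : ℝ)) ∧
    1 ≤ maxSep (pnb φ n) (ε / 3) Set.univ ∧
    (minSpan (fun a b : Fin n → X => dist a b) ε (Orb φ n) : ℝ) ≤
      (⨆ x : X, (minSpan (fun a b : Fin n → X => dist a b) (ε / 3) (OrbAt φ n x) : ℝ)) *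
        (maxSep (pnb φ n) (ε / 3) Set.univ : ℝ) := by
  classical
  have hε3 : 0 < ε / 3 := by linarith
  set d : (Fin n → X) → (Fin n → X) → ℝ := fun a b => dist a b with hd
  set b : ℕ := ⨆ x : X, minSpan d (ε / 3) (OrbAt φ n x) with hb
  set c : ℕ := maxSep (pnb φ n) (ε / 3) Set.univ with hc
  obtain ⟨N, hN⟩ := exists_span_bound (Y := Fin n → X) hε3
  have hms_mem : ∀ x : X, ∃ R : Set (Fin n → X), R ⊆ OrbAt φ n x ∧
      (∀ y ∈ OrbAt φ n x, ∃ w ∈ R, d w y ≤ ε / 3) ∧ R.Finite ∧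
      R.ncard = minSpan d (ε / 3) (OrbAt φ n x) := by
    intro x
    have hne' : {m | ∃ R : Set (Fin n → X), R ⊆ OrbAt φ n x ∧
        (∀ y ∈ OrbAt φ n x, ∃ w ∈ R, d w y ≤ ε / 3) ∧ R.Finite ∧ R.ncard = m}.Nonempty := by
      obtain ⟨R, h1, h2, h3, h4⟩ := hN (OrbAt φ n x)
      exact ⟨R.ncard, R, h1, h2, h3, rfl⟩
    exact Nat.sInf_mem hne'
  have hmsN : ∀ x : X, minSpan d (ε / 3) (OrbAt φ n x) ≤ N := by
    intro x
    obtain ⟨R, h1, h2, h3, h4⟩ := hN (OrbAt φ n x)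
    exact le_trans (Nat.sInf_le ⟨R, h1, h2, h3, rfl⟩) h4
  have hbdd : BddAbove (Set.range fun x : X => minSpan d (ε / 3) (OrbAt φ n x)) :=
    ⟨N, by rintro _ ⟨x, rfl⟩; exact hmsN x⟩
  have hble : ∀ x : X, minSpan d (ε / 3) (OrbAt φ n x) ≤ b := fun x => le_ciSup hbdd x
  have hms1 : ∀ x : X, 1 ≤ minSpan d (ε / 3) (OrbAt φ n x) := by
    intro x
    obtain ⟨R, h1, h2, h3, h4⟩ := hms_mem x
    obtain ⟨y0, hy0⟩ := orbAt_nonempty φ hne n x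
    obtain ⟨r, hr, -⟩ := h2 y0 hy0
    rw [← h4]
    exact (Set.ncard_pos h3).2 ⟨r, hr⟩
  have hb1 : 1 ≤ b := le_trans (hms1 (Classical.arbitrary X)) (hble _)
  -- the separated set S
  obtain ⟨M, hM⟩ := pnb_sep_bound φ hne n hε3
  set cset := {m | ∃ S : Set X, S ⊆ Set.univ ∧ SepSet (pnb φ n) (ε / 3) S ∧ S.Finite ∧
      S.ncard = m} with hcset
  have hcbdd : BddAbove cset := ⟨M, by rintro m ⟨S, -, h2, h3, rfl⟩; exact hM S h2 h3⟩
  have hcne : cset.Nonempty := by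
    refine ⟨1, {Classical.arbitrary X}, Set.subset_univ _, ?_, Set.finite_singleton _,
      Set.ncard_singleton _⟩
    intro u hu v hv huv
    rw [Set.mem_singleton_iff] at hu hv
    exact absurd (hu.trans hv.symm) huv
  have hc1 : 1 ≤ c := by
    refine le_csSup hcbdd ?_
    refine ⟨{Classical.arbitrary X}, Set.subset_univ _, ?_, Set.finite_singleton _,
      Set.ncard_singleton _⟩
    intro u hu v hv huv
    rw [Set.mem_singleton_iff] at hu hv
    exact absurd (hu.trans hv.symm) huv
  have hcs : c = sSup cset := rfl
  obtain ⟨S, -, hSsep, hSfin, hScard⟩ := Nat.sSup_mem hcne hcbdd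
  rw [← hcs] at hScard
  have hSmax : ∀ y : X, ∃ x ∈ S, pnb φ n x y ≤ ε / 3 := by
    intro y
    by_contra hcon
    push_neg at hcon
    have hyS : y ∉ S := by
      intro hy
      have h0 := hcon y hy
      rw [pnb, Metric.hausdorffDist_self_zero] at h0
      linarith
    have hsep' : SepSet (pnb φ n) (ε / 3) (insert y S) := by
      intro u hu v hv huv
      rcases hu with rfl | hu <;> rcases hv with rfl | hv
      · exact absurd rfl huv
      · rw [pnb, Metric.hausdorffDist_comm]; exact hcon v hv
      · exact hcon u hu
      · exact hSsep hu hv huv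
    have hmem : c + 1 ∈ cset :=
      ⟨insert y S, Set.subset_univ _, hsep', hSfin.insert y,
        by rw [Set.ncard_insert_of_notMem hyS hSfin, hScard]⟩
    have := le_csSup hcbdd hmem
    omega
  -- choose spanning sets for each x
  choose Rf hRsub hRspan hRfin hRcard using hms_mem
  set R : Set (Fin n → X) := ⋃ x ∈ S, Rf x with hR
  have hRfin' : R.Finite := hSfin.biUnion fun x _ => hRfin x
  have hRsub' : R ⊆ Orb φ n := by
    rintro r hr
    obtain ⟨x, hx, hrx⟩ := Set.mem_iUnion₂.1 hr
    exact (hRsub x hrx).1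
  have hRspan' : ∀ y ∈ Orb φ n, ∃ w ∈ R, d w y ≤ ε := by
    intro yb hyb
    set y0 : X := if h : 0 < n then yb ⟨0, h⟩ else Classical.arbitrary X with hy0
    have hyb' : yb ∈ OrbAt φ n y0 := ⟨hyb, fun h => by rw [hy0, dif_pos h]⟩
    obtain ⟨x, hxS, hxy⟩ := hSmax y0
    have hbdd1 : Bornology.IsBounded (OrbAt φ n y0) :=
      (isCompact_univ (X := Fin n → X)).isBounded.subset (Set.subset_univ _)
    have hbdd2 : Bornology.IsBounded (OrbAt φ n x) :=
      (isCompact_univ (X := Fin n → X)).isBounded.subset (Set.subset_univ _)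
    have hedist : EMetric.hausdorffEdist (OrbAt φ n y0) (OrbAt φ n x) ≠ ⊤ :=
      Metric.hausdorffEdist_ne_top_of_nonempty_of_bounded (orbAt_nonempty φ hne n y0)
        (orbAt_nonempty φ hne n x) hbdd1 hbdd2
    have hlt : Metric.hausdorffDist (OrbAt φ n y0) (OrbAt φ n x) < ε / 2 := by
      rw [Metric.hausdorffDist_comm]
      calc Metric.hausdorffDist (OrbAt φ n x) (OrbAt φ n y0) ≤ ε / 3 := hxy
        _ < ε / 2 := by linarith
    obtain ⟨zb, hz, hdz⟩ := Metric.exists_dist_lt_of_hausdorffDist_lt hyb' hlt hedist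
    obtain ⟨wb, hw, hwz⟩ := hRspan x zb hz
    refine ⟨wb, Set.mem_iUnion₂.2 ⟨x, hxS, hw⟩, ?_⟩
    have htri := dist_triangle wb zb yb
    have hzy : dist zb yb < ε / 2 := by rw [dist_comm]; exact hdz
    have hwz' : dist wb zb ≤ ε / 3 := hwz
    show dist wb yb ≤ ε
    linarith
  have hcard : R.ncard ≤ b * c := by
    have hRe : R = ↑(hSfin.toFinset.biUnion fun x => (hRfin x).toFinset) := by
      rw [Finset.coe_biUnion]
      simp [hR]
    rw [hRe, Set.ncard_coe_finset]
    calc (hSfin.toFinset.biUnion fun x => (hRfin x).toFinset).card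
        ≤ ∑ x ∈ hSfin.toFinset, ((hRfin x).toFinset).card := Finset.card_biUnion_le
      _ ≤ ∑ _x ∈ hSfin.toFinset, b := by
          refine Finset.sum_le_sum fun x _ => ?_
          rw [← Set.ncard_eq_toFinset_card (Rf x) (hRfin x), hRcard x]
          exact hble x
      _ = hSfin.toFinset.card * b := by rw [Finset.sum_const, smul_eq_mul]
      _ = c * b := by rw [← Set.ncard_eq_toFinset_card S hSfin, hScard]
      _ = b * c := mul_comm _ _
  set bR : ℝ := ⨆ x : X, (minSpan d (ε / 3) (OrbAt φ n x) : ℝ) with hbR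
  have hbRbdd : BddAbove (Set.range fun x : X => (minSpan d (ε / 3) (OrbAt φ n x) : ℝ)) :=
    ⟨N, by rintro _ ⟨x, rfl⟩; simp only []; exact_mod_cast hmsN x⟩
  have hbb : (b : ℝ) ≤ bR := by
    have hmem : b ∈ Set.range fun x : X => minSpan d (ε / 3) (OrbAt φ n x) := by
      rw [hb]
      exact Nat.sSup_mem (Set.range_nonempty _) hbdd
    obtain ⟨x0, hx0⟩ := hmem
    calc (b : ℝ) = ((minSpan d (ε / 3) (OrbAt φ n x0) : ℕ) : ℝ) := by rw [← hx0]
      _ ≤ bR := le_ciSup hbRbdd x0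
  have hbR1 : (1:ℝ) ≤ bR := le_trans (by exact_mod_cast hb1) hbb
  refine ⟨hbR1, hc1, ?_⟩
  have hfin : minSpan d ε (Orb φ n) ≤ b * c :=
    le_trans (Nat.sInf_le ⟨R, hRsub', hRspan', hRfin', rfl⟩) hcard
  calc (minSpan d ε (Orb φ n) : ℝ) ≤ ((b * c : ℕ) : ℝ) := by exact_mod_cast hfin
    _ = (b : ℝ) * (c : ℝ) := by push_cast; ring
    _ ≤ bR * (c : ℝ) := mul_le_mul_of_nonneg_right hbb (Nat.cast_nonneg c)

end Helpers

section
open Set Metric TopologicalSpace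

/-- `h(φ) ≤ h_m(φ) + h_i(φ)` on a compact metric space, where `h` is the orbit
entropy via spanning sets, `h_m` the pointwise spanning entropy, and `h_i` the branch
entropy. -/
theorem entSpan_le_entMSpan_add_entI
    {X : Type*} [MetricSpace X] [CompactSpace X] [Nonempty X]
    (φ : ℕ → X → Set X) (hne : ∀ j x, (φ j x).Nonempty) :
    entSpan φ ≤ entMSpan φ + entI φ := by
  refine iSup₂_le fun ε hε => ?_
  set v : ℕ → EReal := fun n =>
    ((Real.log (⨆ x : X, minSpan (fun a b : Fin n → X => dist a b) (ε / 3) (OrbAt φ n x)) / n :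
      ℝ) : EReal) with hv
  set w : ℕ → EReal := fun n =>
    ((Real.log (maxSep (pnb φ n) (ε / 3) (Set.univ : Set X)) / n : ℝ) : EReal) with hw
  have hε3 : (0:ℝ) < ε / 3 := by linarith
  have hptwise : ∀ n : ℕ,
      ((Real.log (minSpan (fun a b : Fin n → X => dist a b) ε (Orb φ n)) / n : ℝ) : EReal)
        ≤ v n + w n := by
    intro n
    obtain ⟨hb1, hc1, habc⟩ := main_count φ hne hε n
    set a := minSpan (fun a b : Fin n → X => dist a b) ε (Orb φ n) with ha
    set bn : ℝ := ⨆ x : X, (minSpan (fun a b : Fin n → X => dist a b) (ε / 3) (OrbAt φ n x) : ℝ)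
      with hbn
    set cn := maxSep (pnb φ n) (ε / 3) (Set.univ : Set X) with hcn
    have hcR : (1:ℝ) ≤ (cn:ℝ) := by exact_mod_cast hc1
    have hlog : Real.log a ≤ Real.log bn + Real.log (cn : ℝ) := by
      rw [← Real.log_mul (by linarith) (by linarith)]
      rcases Nat.eq_zero_or_pos a with h | h
      · rw [h]
        simp only [Nat.cast_zero, Real.log_zero]
        exact Real.log_nonneg (by nlinarith)
      · refine Real.log_le_log (by exact_mod_cast h) habc
    have hdiv : Real.log a / n ≤ Real.log bn / n + Real.log (cn : ℝ) / n := by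
      rw [← add_div]
      exact div_le_div_of_nonneg_right hlog (Nat.cast_nonneg n)
    calc ((Real.log a / n : ℝ) : EReal)
        ≤ ((Real.log bn / n + Real.log (cn : ℝ) / n : ℝ) : EReal) := EReal.coe_le_coe_iff.2 hdiv
      _ = v n + w n := EReal.coe_add _ _
  have hv0 : ∀ n, (0:EReal) ≤ v n := by
    intro n
    have hb1 := (main_count φ hne hε n).1
    have h0 : (0:ℝ) ≤ Real.log (⨆ x : X,
        (minSpan (fun a b : Fin n → X => dist a b) (ε / 3) (OrbAt φ n x) : ℝ)) / n :=
      div_nonneg (Real.log_nonneg hb1) (Nat.cast_nonneg n)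
    exact EReal.coe_nonneg.2 h0
  have hw0 : ∀ n, (0:EReal) ≤ w n := by
    intro n
    have hc1 := (main_count φ hne hε n).2.1
    have h0 : (0:ℝ) ≤ Real.log (maxSep (pnb φ n) (ε / 3) (Set.univ : Set X)) / n :=
      div_nonneg (Real.log_nonneg (by exact_mod_cast hc1)) (Nat.cast_nonneg n)
    exact EReal.coe_nonneg.2 h0
  have hvb : limsup v atTop ≠ ⊥ := by
    have h0 : limsup (fun _ : ℕ => (0:EReal)) atTop ≤ limsup v atTop :=
      limsup_le_limsup (Eventually.of_forall hv0)
    rw [limsup_const] at h0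
    exact ((bot_lt_iff_ne_bot.2 (by simp)).trans_le h0).ne'
  have hwb : limsup w atTop ≠ ⊥ := by
    have h0 : limsup (fun _ : ℕ => (0:EReal)) atTop ≤ limsup w atTop :=
      limsup_le_limsup (Eventually.of_forall hw0)
    rw [limsup_const] at h0
    exact ((bot_lt_iff_ne_bot.2 (by simp)).trans_le h0).ne'
  have step1 : limsup (fun n : ℕ =>
      ((Real.log (minSpan (fun a b : Fin n → X => dist a b) ε (Orb φ n)) / n : ℝ) : EReal))
        atTop ≤ limsup (v + w) atTop :=
    limsup_le_limsup (Eventually.of_forall hptwise)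
  have step2 : limsup (v + w) atTop ≤ limsup v atTop + limsup w atTop :=
    EReal.limsup_add_le (Or.inl hvb) (Or.inr hwb)
  have hvM : limsup v atTop ≤ entMSpan φ := le_iSup₂_of_le (ε / 3) hε3 le_rfl
  have hwI : limsup w atTop ≤ entI φ := le_iSup₂_of_le (ε / 3) hε3 le_rfl
  exact step1.trans (step2.trans (add_le_add hvM hwI))

end

end
end
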